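/- arXiv:1108.4007 — 2 statements merged into one kernel-verified Lean document; each statement's English description precedes it below -/
import Mathlib

section
/- Let X be a reduced ACM zero-dimensional subscheme of P^1 × P^1 and let P_{i_1 j_1},…,P_{i_h j_h} ∈ X be interior points with pairwise distinct row indices and pairwise distinct column indices. Set Z = X \ {P_{i_1 j_1},…,P_{i_h j_h}}, q_l + 1 = #(X ∩ C_{j_l}), p_l + 1 = #(X ∩ R_{i_l}), and r_{ij} = #{l : (q_l, p_l) = (i,j)}. Then the first difference of the Hilbert function of Z satisfies ΔM_Z(i,j) = ΔM_X(i,j) − r_{ij} for all (i,j). -/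
/- Common setup: the bigraded coordinate ring of Q = P^1 x P^1, bigraded Hilbert
functions, point ideals, separators, minimal free resolutions, staircase (Ferrers)
configurations of reduced ACM schemes. -/

open MvPolynomial

attribute [local instance] Classical.propDecidable

noncomputable section

/-- Variables of the bihomogeneous coordinate ring: `inl` = x₀,x₁ and `inr` = y₀,y₁. -/
abbrev BiVar := Fin 2 ⊕ Fin 2

/-- The bigraded coordinate ring S = k[x₀,x₁;y₀,y₁] of Q = P¹ × P¹. -/
abbrev S2 (k : Type) [Field k] := MvPolynomial BiVar k

/-- The bigrading weights: x-variables have degree (1,0), y-variables degree (0,1). -/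
def bw : BiVar → ℕ × ℕ := Sum.elim (fun _ => (1, 0)) (fun _ => (0, 1))

/-- P¹ over k. -/
abbrev P1 (k : Type) [Field k] := Projectivization k (Fin 2 → k)

/-- A point of Q = P¹ × P¹. -/
abbrev PtQ (k : Type) [Field k] := P1 k × P1 k

variable {k : Type} [Field k]

/-- Evaluation of a polynomial at (a representative of) a point of Q. -/
def evalPt (x : PtQ k) : S2 k →+* k :=
  MvPolynomial.eval (Sum.elim x.1.rep x.2.rep)

/-- An ideal is bihomogeneous if it contains all bihomogeneous components of its members. -/
def IsBihom (I : Ideal (S2 k)) : Prop :=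
  ∀ f ∈ I, ∀ d : ℕ × ℕ, weightedHomogeneousComponent bw d f ∈ I

/-- Saturation with respect to the irrelevant ideal (x₀,x₁) ∩ (y₀,y₁). -/
def IsSat (I : Ideal (S2 k)) : Prop :=
  ∀ f : S2 k, (∀ i j : Fin 2, X (Sum.inl i) * X (Sum.inr j) * f ∈ I) → f ∈ I

/-- The zero locus in Q of a (bihomogeneous) ideal. -/
def biZeroLocus (I : Ideal (S2 k)) : Set (PtQ k) :=
  {x | ∀ f ∈ I, ∀ d : ℕ × ℕ, evalPt x (weightedHomogeneousComponent bw d f) = 0}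

/-- The (saturated) ideal of a point of Q: generated by the bihomogeneous forms vanishing there. -/
def pointIdeal (x : PtQ k) : Ideal (S2 k) :=
  Ideal.span {f | (∃ d : ℕ × ℕ, IsWeightedHomogeneous bw f d) ∧ evalPt x f = 0}

/-- The saturated ideal of a reduced finite set of points of Q. -/
def idealOfFinset (Z : Finset (PtQ k)) : Ideal (S2 k) :=
  ⨅ x ∈ Z, pointIdeal x

/-- The bigraded piece of degree d of an ideal, as a k-subspace. -/
def Ipiece (I : Ideal (S2 k)) (d : ℕ × ℕ) : Submodule k (S2 k) :=
  (Submodule.restrictScalars k I) ⊓ weightedHomogeneousSubmodule k bw d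

/-- The bigraded Hilbert function M_X(i,j) = dim S_{i,j} - dim (I_X)_{i,j}. -/
def hilb (I : Ideal (S2 k)) (i j : ℕ) : ℕ :=
  Module.finrank k (weightedHomogeneousSubmodule k bw ((i, j) : ℕ × ℕ)) -
    Module.finrank k (Ipiece I (i, j))

/-- The Hilbert function extended by 0 to negative arguments. -/
def HM (I : Ideal (S2 k)) (i j : ℤ) : ℤ :=
  if 0 ≤ i ∧ 0 ≤ j then (hilb I i.toNat j.toNat : ℤ) else 0

/-- The first difference ΔM_X of the Hilbert function. -/
def ΔH (I : Ideal (S2 k)) (i j : ℤ) : ℤ :=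
  HM I i j - HM I (i - 1) j - HM I i (j - 1) + HM I (i - 1) (j - 1)

/-- Index of a nonzero coordinate of a nonzero vector in k². -/
def pivot (v : Fin 2 → k) : Fin 2 := if v 0 ≠ 0 then 0 else 1

/-- The other index. -/
def off : Fin 2 → Fin 2 := fun s => if s = 0 then 1 else 0

/-- Dehomogenization onto the affine chart around a point of Q. -/
def chartHom (x : PtQ k) : S2 k →+* MvPolynomial (Fin 2) k :=
  (aeval (R := k) (Sum.elim
    (fun i : Fin 2 => if i = pivot x.1.rep then 1 else X 0)
    (fun j : Fin 2 => if j = pivot x.2.rep then 1 else X 1))).toRingHom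

/-- The affine coordinates of a point of Q in its chart. -/
def affPt (x : PtQ k) : Fin 2 → k := fun u =>
  if u = 0 then x.1.rep (off (pivot x.1.rep)) / x.1.rep (pivot x.1.rep)
  else x.2.rep (off (pivot x.2.rep)) / x.2.rep (pivot x.2.rep)

/-- The multiplicity m_X(P): the length of the local ring O_{X,P}, computed in the
affine chart as the stable value of dim A/(I_aff + m_P^n). -/
def mult (I : Ideal (S2 k)) (x : PtQ k) : ℕ :=
  ⨆ n : ℕ, Module.finrank k
    (MvPolynomial (Fin 2) k ⧸
      (Ideal.map (chartHom x) I ⊔ (RingHom.ker (MvPolynomial.eval (affPt x))) ^ n))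

/-- X is arithmetically Cohen–Macaulay: depth S(X) = 2, i.e. there is a regular
sequence of length two on S/I_X inside the maximal ideal of S. -/
def IsACM (I : Ideal (S2 k)) : Prop :=
  ∃ f g : S2 k, constantCoeff f = 0 ∧ constantCoeff g = 0 ∧
    (∀ h : S2 k, f * h ∈ I → h ∈ I) ∧
    (∀ h : S2 k, g * h ∈ I ⊔ Ideal.span {f} → h ∈ I ⊔ Ideal.span {f})

/-- f is a separator of degree d for the point x relative to the residual scheme Z:
f is bihomogeneous of degree d, vanishes on Z, and is nonzero at x. -/
def IsSeparator (IZ : Ideal (S2 k)) (x : PtQ k) (f : S2 k) (d : ℕ × ℕ) : Prop :=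
  IsWeightedHomogeneous bw f d ∧ f ∈ IZ ∧ evalPt x f ≠ 0

/-- The set of separating degrees for x relative to Z. -/
def SepDegs (IZ : Ideal (S2 k)) (x : PtQ k) : Set (ℕ × ℕ) :=
  {d | ∃ f, IsSeparator IZ x f d}

/-- d is a minimal separating degree (componentwise partial order). -/
def IsMinSepDeg (IZ : Ideal (S2 k)) (x : PtQ k) (d : ℕ × ℕ) : Prop :=
  d ∈ SepDegs IZ x ∧ ∀ e ∈ SepDegs IZ x, ¬ e < d

/-- d is the unique minimal separating degree. -/
def UniqueMinSepDeg (IZ : Ideal (S2 k)) (x : PtQ k) (d : ℕ × ℕ) : Prop :=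
  IsMinSepDeg IZ x d ∧ ∀ e, IsMinSepDeg IZ x e → e = d

/-- f splits into a product of forms of degree (1,0) and (0,1), i.e. the curve f = 0
is a union of (1,0)- and (0,1)-lines. -/
def SplitsIntoLines (f : S2 k) : Prop :=
  ∃ L : Multiset (S2 k),
    (∀ l ∈ L, IsWeightedHomogeneous bw l ((1 : ℕ), (0 : ℕ)) ∨
      IsWeightedHomogeneous bw l ((0 : ℕ), (1 : ℕ))) ∧ f = L.prod

/-- `IsMFR3 I d0 d1 d2` : the ideal I has minimal bigraded free resolution
0 → ⊕ S(-d2 i) → ⊕ S(-d1 i) → ⊕ S(-d0 i) → I → 0, given by a minimal generating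
system of the listed degrees, a first-syzygy matrix A and a second-syzygy matrix B,
homogeneous of the appropriate degrees, with entries in the maximal ideal (minimality). -/
def IsMFR3 {ι₀ ι₁ ι₂ : Type} [Fintype ι₀] [Fintype ι₁] [Fintype ι₂]
    (I : Ideal (S2 k)) (d0 : ι₀ → ℕ × ℕ) (d1 : ι₁ → ℕ × ℕ) (d2 : ι₂ → ℕ × ℕ) : Prop :=
  ∃ (g : ι₀ → S2 k) (A : ι₁ → ι₀ → S2 k) (B : ι₂ → ι₁ → S2 k),
    (∀ i, IsWeightedHomogeneous bw (g i) (d0 i)) ∧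
    I = Ideal.span (Set.range g) ∧
    (∀ i j, A i j = 0 ∨ (d0 j ≤ d1 i ∧
      IsWeightedHomogeneous bw (A i j) ((d1 i).1 - (d0 j).1, (d1 i).2 - (d0 j).2))) ∧
    (∀ i j, constantCoeff (A i j) = 0) ∧
    (∀ i, ∑ j, A i j * g j = 0) ∧
    (∀ v : ι₀ → S2 k, ∑ j, v j * g j = 0 →
      ∃ c : ι₁ → S2 k, ∀ j, v j = ∑ i, c i * A i j) ∧
    (∀ i j, B i j = 0 ∨ (d1 j ≤ d2 i ∧
      IsWeightedHomogeneous bw (B i j) ((d2 i).1 - (d1 j).1, (d2 i).2 - (d1 j).2))) ∧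
    (∀ i j, constantCoeff (B i j) = 0) ∧
    (∀ i j, ∑ l, B i l * A l j = 0) ∧
    (∀ c : ι₁ → S2 k, (∀ j, ∑ i, c i * A i j = 0) →
      ∃ e : ι₂ → S2 k, ∀ i, c i = ∑ l, e l * B l i) ∧
    (∀ e : ι₂ → S2 k, (∀ i, ∑ l, e l * B l i = 0) → e = 0)

/-- A minimal free resolution of length 2 (the ACM case). -/
def IsMFR2 {ι₀ ι₁ : Type} [Fintype ι₀] [Fintype ι₁]
    (I : Ideal (S2 k)) (d0 : ι₀ → ℕ × ℕ) (d1 : ι₁ → ℕ × ℕ) : Prop :=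
  IsMFR3 I d0 d1 (fun e : Fin 0 => e.elim0)

/-- A reduced ACM zero-dimensional scheme in Q: points P_{ij} = R_i ∩ C_j indexed by a
lower-closed (staircase/Ferrers) diagram D in a grid of distinct (1,0)-lines R_i and
(0,1)-lines C_j, each containing at least one point of X. -/
structure Staircase (k : Type) [Field k] where
  a : ℕ
  b : ℕ
  R : ℕ → P1 k
  C : ℕ → P1 k
  hR : ∀ i ≤ a, ∀ i' ≤ a, R i = R i' → i = i'
  hC : ∀ j ≤ b, ∀ j' ≤ b, C j = C j' → j = j'
  D : Finset (ℕ × ℕ)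
  bound : ∀ p ∈ D, p.1 ≤ a ∧ p.2 ≤ b
  lower : ∀ p ∈ D, ∀ q : ℕ × ℕ, q.1 ≤ p.1 → q.2 ≤ p.2 → q ∈ D
  rows : ∀ i ≤ a, (i, 0) ∈ D
  cols : ∀ j ≤ b, (0, j) ∈ D

namespace Staircase

variable (T : Staircase k)

/-- The points of X. -/
def pts : Finset (PtQ k) := T.D.image (fun p => (T.R p.1, T.C p.2))

/-- The saturated ideal of X. -/
def ideal : Ideal (S2 k) := idealOfFinset T.pts

/-- #(X ∩ R_i). -/
def rowCount (i : ℕ) : ℕ := (T.D.filter (fun p => p.1 = i)).card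

/-- #(X ∩ C_j). -/
def colCount (j : ℕ) : ℕ := (T.D.filter (fun p => p.2 = j)).card

/-- (r,s) is a corner for X: P_{r-1,s}, P_{r,s-1} ∈ X but P_{r,s} ∉ X. -/
def IsCorner (r s : ℕ) : Prop :=
  0 < r ∧ 0 < s ∧ (r - 1, s) ∈ T.D ∧ (r, s - 1) ∈ T.D ∧ (r, s) ∉ T.D

/-- P_{ij} is an interior point of X: strictly dominated componentwise by some corner. -/
def Interior (i j : ℕ) : Prop :=
  (i, j) ∈ T.D ∧ ∃ r s, T.IsCorner r s ∧ i < r ∧ j < s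

/-- The saturated ideal of X minus the points of X indexed by E. -/
def residual (E : Finset (ℕ × ℕ)) : Ideal (S2 k) :=
  idealOfFinset ((T.D \ E).image (fun p => (T.R p.1, T.C p.2)))

end Staircase

/-- (i,j) is a vertex for a difference matrix c. -/
def IsVertexΔ (c : ℤ → ℤ → ℤ) (i j : ℤ) : Prop :=
  c (i - 1) j ≤ 0 ∧ c i (j - 1) ≤ 0 ∧ c (i - 1) (j - 1) = 1

/-- (i,j) is a corner for a difference matrix c. -/
def IsCornerΔ (c : ℤ → ℤ → ℤ) (i j : ℤ) : Prop :=
  c i j ≤ 0 ∧ c i (j - 1) = 1 ∧ c (i - 1) j = 1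

end

/-! Write `V_W(d)` (`Ipiece (idealOfFinset W) d`) for the forms of bidegree `d` vanishing on a
finite set `W ⊆ Q`, so that `M_W(d) = dim S_d - dim V_W(d)`. Evaluation at the removed points maps `V_Z(i,j)` to `k^h`.
If the removed point `P` has `q ≤ i` and `p ≤ j`, the product of the `(1,0)`-lines through the
other points of its column and the `(0,1)`-lines through the other points of its row, padded to
bidegree `(i,j)`, vanishes on `X \ {P}` (because `X` is a staircase) but not at `P`.
If instead `q > i`, a form of bidegree `(i,j)` vanishing on `Z` vanishes at the `q` other points of
the column of `P` (none of them is removed, the removed points lying in distinct columns), hence on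
the whole column, in particular at `P`; symmetrically when `p > j`. So the evaluation map has
kernel `V_X(i,j)` and image of dimension `#{l | q_l ≤ i ∧ p_l ≤ j}`, which gives
`M_Z(i,j) = M_X(i,j) - #{l | q_l ≤ i ∧ p_l ≤ j}`; taking first differences yields the theorem. -/

namespace MvPolynomial

theorem IsWeightedHomogeneous.aeval {R σ τ M N : Type*} [CommSemiring R] [AddCommMonoid M]
    [AddCommMonoid N] {w : σ → M} {w' : τ → N} (φ : M →+ N) {F : MvPolynomial σ R} {d : M}
    (hF : IsWeightedHomogeneous w F d) {g : σ → MvPolynomial τ R}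
    (hg : ∀ i, IsWeightedHomogeneous w' (g i) (φ (w i))) :
    IsWeightedHomogeneous w' (aeval g F) (φ d) := by
  rw [F.as_sum, map_sum]
  refine IsWeightedHomogeneous.sum _ _ _ fun e he => ?_
  rw [← hF (mem_support_iff.mp he), aeval_monomial, Finsupp.weight_apply, map_finsuppSum]
  simp only [map_nsmul, Finsupp.prod]
  exact ((IsWeightedHomogeneous.prod _ _ _ fun i _ => (hg i).pow (e i)).C_mul _)

end MvPolynomial

instance {k : Type} [Field k] (d : ℕ × ℕ) :
    Module.Finite k (weightedHomogeneousSubmodule k bw d) := by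
  have hle : weightedHomogeneousSubmodule k bw d ≤
      weightedHomogeneousSubmodule k (1 : BiVar → ℕ) (d.1 + d.2) := fun F hF => by
    have := ((mem_weightedHomogeneousSubmodule _ _ _ _).mp hF).aeval
      (AddMonoidHom.fst ℕ ℕ + AddMonoidHom.snd ℕ ℕ) (g := X) (w' := 1)
      (fun i => by cases i <;> simpa [bw] using isWeightedHomogeneous_X k (1 : BiVar → ℕ) _)
    rwa [aeval_X_left] at this
  have : Module.Finite k (weightedHomogeneousSubmodule k (1 : BiVar → ℕ) (d.1 + d.2)) :=
    Module.Finite.iff_fg.mpr (weightedHomogeneousSubmodule_fg k 1 (fun _ => one_ne_zero) _)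
  exact Submodule.finiteDimensional_of_le hle

section ProjectiveLine

variable {k : Type} [Field k]

theorem P1.rep_zero_ne_zero_of_rep_one_eq_zero {x : P1 k} (hx : x.rep 1 = 0) : x.rep 0 ≠ 0 :=
  fun h0 => x.rep_nonzero (funext fun i => by fin_cases i <;> assumption)

theorem P1.eq_iff_mul_eq_mul {x y : P1 k} : x = y ↔ x.rep 0 * y.rep 1 = x.rep 1 * y.rep 0 := by
  refine ⟨fun h => h ▸ mul_comm _ _, fun h => ?_⟩
  rw [← x.mk_rep, ← y.mk_rep, Projectivization.mk_eq_mk_iff']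
  by_cases hy : y.rep 1 = 0
  · have hy0 := P1.rep_zero_ne_zero_of_rep_one_eq_zero hy
    have hx : x.rep 1 = 0 := by simpa [hy, hy0] using h.symm
    refine ⟨x.rep 0 / y.rep 0, funext fun i => ?_⟩
    fin_cases i <;> simp [hy, hy0, hx]
  · refine ⟨x.rep 1 / y.rep 1, funext fun i => ?_⟩
    fin_cases i
    · simp only [Fin.zero_eta, Fin.isValue, Pi.smul_apply, smul_eq_mul]
      field_simp
      linear_combination -h
    · simp [hy]

theorem P1.eq_of_rep_one_eq_zero {x y : P1 k} (hx : x.rep 1 = 0) (hy : y.rep 1 = 0) : x = y := by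
  simp [P1.eq_iff_mul_eq_mul, hx, hy]

theorem P1.injOn_rep_zero_div_rep_one :
    Set.InjOn (fun x : P1 k => x.rep 0 / x.rep 1) {x | x.rep 1 ≠ 0} := fun x hx y hy hxy => by
  rw [Set.mem_ofPred_eq] at hx hy
  rw [P1.eq_iff_mul_eq_mul]
  rw [div_eq_div_iff hx hy] at hxy
  linear_combination hxy

theorem P1.card_filter_rep_one_eq_zero_le_one (S : Finset (P1 k)) :
    (S.filter fun x => x.rep 1 = 0).card ≤ 1 :=
  Finset.card_le_one.mpr fun _ hx _ hy =>
    P1.eq_of_rep_one_eq_zero (Finset.mem_filter.mp hx).2 (Finset.mem_filter.mp hy).2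

theorem rep_pivot_ne_zero (x : P1 k) : x.rep (pivot x.rep) ≠ 0 := by
  unfold pivot
  split_ifs with h
  · exact h
  · exact fun h1 => P1.rep_zero_ne_zero_of_rep_one_eq_zero h1 (not_not.mp h)

theorem Polynomial.eval_homogenize_of_eq_zero (p : Polynomial k) (n : ℕ) {x : Fin 2 → k}
    (hx : x 1 = 0) : MvPolynomial.eval x (p.homogenize n) = p.coeff n * x 0 ^ n := by
  simp only [Polynomial.homogenize, MvPolynomial.eval_sum, MvPolynomial.eval_monomial]
  rw [Finset.sum_eq_single (n, 0)]
  · simp [Finsupp.prod_fintype]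
  · rintro ⟨a, b⟩ hab hne
    have hb : b ≠ 0 := by
      rintro rfl
      simp_all
    simp [Finsupp.prod_fintype, hx, hb]
  · simp

theorem MvPolynomial.IsHomogeneous.natDegree_aeval_le {q : MvPolynomial (Fin 2) k} {n : ℕ}
    (hq : q.IsHomogeneous n) :
    (MvPolynomial.aeval ![(Polynomial.X : Polynomial k), 1] q).natDegree ≤ n := by
  rw [q.as_sum, map_sum]
  refine Polynomial.natDegree_sum_le_of_forall_le _ _ fun e he => ?_
  have he' : e 0 + e 1 = n := by simpa [Finsupp.weight_eq_sum] using hq (mem_support_iff.mp he)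
  rw [aeval_monomial, Finsupp.prod_fintype _ _ (by simp)]
  simp only [Fin.prod_univ_two, Matrix.cons_val_zero, Matrix.cons_val_one, one_pow, mul_one]
  refine (Polynomial.natDegree_C_mul_le _ _).trans ?_
  rw [Polynomial.natDegree_X_pow]
  omega

theorem MvPolynomial.IsHomogeneous.eq_zero_of_lt_card {q : MvPolynomial (Fin 2) k} {n : ℕ}
    (hq : q.IsHomogeneous n) {S : Finset (P1 k)} (hS : n < S.card)
    (h : ∀ x ∈ S, eval x.rep q = 0) : q = 0 := by
  -- Dehomogenize at `x 1`: the points of `S` off infinity give distinct roots of `p`, and the point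
  -- at infinity, if it is in `S`, kills `p.coeff n`.
  obtain ⟨p, hpn, rfl⟩ : ∃ p : Polynomial k, p.natDegree ≤ n ∧ p.homogenize n = q :=
    ⟨_, hq.natDegree_aeval_le, Polynomial.homogenize_eq_of_isHomogeneous hq rfl⟩
  rw [Polynomial.homogenize_eq_zero_iff hpn]
  set S₀ := S.filter fun x => x.rep 1 ≠ 0
  have hroots : ∀ t ∈ S₀.image fun x => x.rep 0 / x.rep 1, p.eval t = 0 := by
    simp only [Finset.mem_image, Finset.mem_filter, S₀]
    rintro _ ⟨x, ⟨hxS, hx⟩, rfl⟩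
    simpa [Polynomial.eval_homogenize hpn _ hx, hx] using h x hxS
  have hinj : (S₀.image fun x => x.rep 0 / x.rep 1).card = S₀.card :=
    Finset.card_image_of_injOn
      (P1.injOn_rep_zero_div_rep_one.mono fun x hx => (Finset.mem_filter.mp hx).2)
  have hinf := P1.card_filter_rep_one_eq_zero_le_one S
  have hS₀ : S₀.card + (S.filter fun x => ¬ x.rep 1 ≠ 0).card = S.card :=
    Finset.card_filter_add_card_filter_not _
  simp only [not_not] at hS₀
  by_contra hp
  refine hp (Polynomial.eq_zero_of_natDegree_lt_card_of_eval_eq_zero' p _ hroots ?_)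
  rw [hinj]
  by_cases hall : S₀ = S
  · rw [hall]
    omega
  obtain ⟨x, hxS, hx⟩ : ∃ x ∈ S, x.rep 1 = 0 := by
    by_contra! hne
    exact hall (Finset.filter_true_of_mem hne)
  have hcoeff : p.coeff n = 0 := by
    simpa [Polynomial.eval_homogenize_of_eq_zero p n hx,
      P1.rep_zero_ne_zero_of_rep_one_eq_zero hx] using h x hxS
  have : p.natDegree ≠ n := fun he =>
    hp (Polynomial.leadingCoeff_eq_zero.mp (by rwa [Polynomial.leadingCoeff, he]))
  omega

end ProjectiveLine

section BihomogeneousForms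

variable {k : Type} [Field k]

theorem evalPt_eq_zero_on_col_of_lt_card {F : S2 k} {n m : ℕ}
    (hF : IsWeightedHomogeneous bw F (n, m)) (c : P1 k) {S : Finset (P1 k)} (hS : n < S.card)
    (h : ∀ x ∈ S, evalPt (x, c) F = 0) (x : P1 k) : evalPt (x, c) F = 0 := by
  set q := aeval (Sum.elim X fun j => C (c.rep j)) F with hqdef
  have heval : ∀ x : P1 k, evalPt (x, c) F = eval x.rep q := fun x => by
    rw [hqdef, aeval_eq_bind₁, eval, eval₂Hom_bind₁, evalPt]
    congr 2
    ext (i | j) <;> simp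
  have hq : q.IsHomogeneous n := hF.aeval (AddMonoidHom.fst ℕ ℕ) fun i => by
    cases i
    · simpa [bw] using isWeightedHomogeneous_X k (1 : Fin 2 → ℕ) _
    · simpa [bw] using isWeightedHomogeneous_C (1 : Fin 2 → ℕ) _
  rw [heval, hq.eq_zero_of_lt_card hS fun x hx => (heval x).symm.trans (h x hx), map_zero]

theorem evalPt_eq_zero_on_row_of_lt_card {F : S2 k} {n m : ℕ}
    (hF : IsWeightedHomogeneous bw F (n, m)) (r : P1 k) {S : Finset (P1 k)} (hS : m < S.card)
    (h : ∀ y ∈ S, evalPt (r, y) F = 0) (y : P1 k) : evalPt (r, y) F = 0 := by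
  set q := aeval (Sum.elim (fun i => C (r.rep i)) X) F with hqdef
  have heval : ∀ y : P1 k, evalPt (r, y) F = eval y.rep q := fun y => by
    rw [hqdef, aeval_eq_bind₁, eval, eval₂Hom_bind₁, evalPt]
    congr 2
    ext (i | j) <;> simp
  have hq : q.IsHomogeneous m := hF.aeval (AddMonoidHom.snd ℕ ℕ) fun i => by
    cases i
    · simpa [bw] using isWeightedHomogeneous_C (1 : Fin 2 → ℕ) _
    · simpa [bw] using isWeightedHomogeneous_X k (1 : Fin 2 → ℕ) _
  rw [heval, hq.eq_zero_of_lt_card hS fun y hy => (heval y).symm.trans (h y hy), map_zero]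

noncomputable def rowForm (r : P1 k) : S2 k := C (r.rep 1) * X (.inl 0) - C (r.rep 0) * X (.inl 1)

noncomputable def colForm (c : P1 k) : S2 k := C (c.rep 1) * X (.inr 0) - C (c.rep 0) * X (.inr 1)

theorem isWeightedHomogeneous_rowForm (r : P1 k) : IsWeightedHomogeneous bw (rowForm r) (1, 0) :=
  ((isWeightedHomogeneous_X k bw _).C_mul _).sub ((isWeightedHomogeneous_X k bw _).C_mul _)

theorem isWeightedHomogeneous_colForm (c : P1 k) : IsWeightedHomogeneous bw (colForm c) (0, 1) :=
  ((isWeightedHomogeneous_X k bw _).C_mul _).sub ((isWeightedHomogeneous_X k bw _).C_mul _)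

theorem evalPt_rowForm_eq_zero_iff (r : P1 k) (z : PtQ k) : evalPt z (rowForm r) = 0 ↔ z.1 = r := by
  simp [rowForm, evalPt, P1.eq_iff_mul_eq_mul, sub_eq_zero, mul_comm]

theorem evalPt_colForm_eq_zero_iff (c : P1 k) (z : PtQ k) : evalPt z (colForm c) = 0 ↔ z.2 = c := by
  simp [colForm, evalPt, P1.eq_iff_mul_eq_mul, sub_eq_zero, mul_comm]

end BihomogeneousForms

section FinitePointSets

variable {k : Type} [Field k]

theorem evalPt_eq_zero_of_mem_idealOfFinset {W : Finset (PtQ k)} {f : S2 k}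
    (hf : f ∈ idealOfFinset W) {x : PtQ k} (hx : x ∈ W) : evalPt x f = 0 := by
  have hfx : f ∈ pointIdeal x := Ideal.mem_iInf.mp (Ideal.mem_iInf.mp hf x) hx
  exact (Ideal.span_le (I := RingHom.ker (evalPt x))).mpr (fun g hg => hg.2) hfx

theorem MvPolynomial.IsWeightedHomogeneous.mem_idealOfFinset_iff {W : Finset (PtQ k)} {f : S2 k}
    {d : ℕ × ℕ} (hf : IsWeightedHomogeneous bw f d) :
    f ∈ idealOfFinset W ↔ ∀ x ∈ W, evalPt x f = 0 :=
  ⟨fun h _ hx => evalPt_eq_zero_of_mem_idealOfFinset h hx, fun h =>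
    Ideal.mem_iInf.mpr fun x => Ideal.mem_iInf.mpr fun hx => Ideal.subset_span ⟨⟨d, hf⟩, h x hx⟩⟩

theorem mem_Ipiece_idealOfFinset {W : Finset (PtQ k)} {d : ℕ × ℕ} {f : S2 k} :
    f ∈ Ipiece (idealOfFinset W) d ↔ IsWeightedHomogeneous bw f d ∧ ∀ x ∈ W, evalPt x f = 0 := by
  rw [Ipiece, Submodule.mem_inf, Submodule.restrictScalars_mem, mem_weightedHomogeneousSubmodule]
  exact ⟨fun ⟨hI, hf⟩ => ⟨hf, hf.mem_idealOfFinset_iff.mp hI⟩,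
    fun ⟨hf, hW⟩ => ⟨hf.mem_idealOfFinset_iff.mpr hW, hf⟩⟩

noncomputable def evalAt (V : Submodule k (S2 k)) (G : Finset (PtQ k)) : V →ₗ[k] G → k :=
  LinearMap.pi fun P => (aeval (Sum.elim P.1.1.rep P.1.2.rep)).toLinearMap ∘ₗ V.subtype

theorem evalAt_apply (V : Submodule k (S2 k)) (G : Finset (PtQ k)) (f : V) (P : G) :
    evalAt V G f P = evalPt P f :=
  rfl

theorem IsSeparator.exists_evalPt_eq_one {f : S2 k} {d : ℕ × ℕ}
    {W : Finset (PtQ k)} {P : PtQ k} (hf : IsSeparator (idealOfFinset W) P f d) :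
    ∃ s ∈ Ipiece (idealOfFinset W) d, evalPt P s = 1 := by
  obtain ⟨hfd, hfW, hfP⟩ := hf
  refine ⟨C (evalPt P f)⁻¹ * f, mem_Ipiece_idealOfFinset.mpr ⟨hfd.C_mul _, fun x hx => ?_⟩, ?_⟩
  · simp [evalPt_eq_zero_of_mem_idealOfFinset hfW hx]
  · simpa [evalPt] using inv_mul_cancel₀ hfP

theorem surjective_evalAt {X Z G : Finset (PtQ k)} {d : ℕ × ℕ} (hZX : Z ⊆ X) (hG : G ⊆ X \ Z)
    (hsep : ∀ P ∈ G, ∃ f, IsSeparator (idealOfFinset (X.erase P)) P f d) :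
    Function.Surjective (evalAt (Ipiece (idealOfFinset Z) d) G) := by
  have hsingle : ∀ P : G, ∃ s, evalAt (Ipiece (idealOfFinset Z) d) G s = Pi.single P 1 := by
    rintro ⟨P, hP⟩
    obtain ⟨f, hf⟩ := hsep P hP
    obtain ⟨s, hs, hsP⟩ := hf.exists_evalPt_eq_one
    obtain ⟨hsd, hsX⟩ := mem_Ipiece_idealOfFinset.mp hs
    have hsZ : ∀ x ∈ Z, evalPt x s = 0 := fun x hx =>
      hsX x (Finset.mem_erase.mpr ⟨fun h => (Finset.mem_sdiff.mp (hG hP)).2 (h ▸ hx), hZX hx⟩)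
    refine ⟨⟨s, mem_Ipiece_idealOfFinset.mpr ⟨hsd, hsZ⟩⟩, funext fun P' => ?_⟩
    rw [evalAt_apply]
    by_cases hPP' : P' = ⟨P, hP⟩
    · subst hPP'
      simp [hsP]
    · rw [Pi.single_eq_of_ne hPP']
      exact hsX P' (Finset.mem_erase.mpr
        ⟨fun h => hPP' (Subtype.ext h), (Finset.mem_sdiff.mp (hG P'.2)).1⟩)
  choose s hs using hsingle
  intro v
  refine ⟨∑ P, v P • s P, ?_⟩
  simp only [map_sum, map_smul, hs]
  exact (pi_eq_sum_univ' v).symm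

theorem ker_evalAt {X Z G : Finset (PtQ k)} {d : ℕ × ℕ} (hG : G ⊆ X \ Z)
    (hforced : ∀ P ∈ X \ Z, P ∉ G → ∀ f ∈ Ipiece (idealOfFinset Z) d, evalPt P f = 0) :
    LinearMap.ker (evalAt (Ipiece (idealOfFinset Z) d) G) =
      (Ipiece (idealOfFinset X) d).comap (Ipiece (idealOfFinset Z) d).subtype := by
  ext f
  obtain ⟨hfd, hfZ⟩ := mem_Ipiece_idealOfFinset.mp f.2
  simp only [LinearMap.mem_ker, Submodule.mem_comap, Submodule.coe_subtype,
    mem_Ipiece_idealOfFinset, hfd, true_and, _root_.funext_iff, evalAt_apply, Pi.zero_apply,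
    Subtype.forall]
  refine ⟨fun hfG x hx => ?_, fun hfX P hP => hfX P (Finset.mem_sdiff.mp (hG hP)).1⟩
  by_cases hxZ : x ∈ Z
  · exact hfZ x hxZ
  by_cases hxG : x ∈ G
  · exact hfG x hxG
  · exact hforced x (Finset.mem_sdiff.mpr ⟨hx, hxZ⟩) hxG f f.2

theorem finrank_Ipiece_idealOfFinset_eq_add_card {X Z G : Finset (PtQ k)} {d : ℕ × ℕ}
    (hZX : Z ⊆ X) (hG : G ⊆ X \ Z)
    (hsep : ∀ P ∈ G, ∃ f, IsSeparator (idealOfFinset (X.erase P)) P f d)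
    (hforced : ∀ P ∈ X \ Z, P ∉ G → ∀ f ∈ Ipiece (idealOfFinset Z) d, evalPt P f = 0) :
    Module.finrank k (Ipiece (idealOfFinset Z) d) =
      Module.finrank k (Ipiece (idealOfFinset X) d) + G.card := by
  have : Module.Finite k (Ipiece (idealOfFinset Z) d) :=
    Submodule.finiteDimensional_of_le inf_le_right
  have hXZ : Ipiece (idealOfFinset X) d ≤ Ipiece (idealOfFinset Z) d := fun f hf => by
    obtain ⟨hfd, hfX⟩ := mem_Ipiece_idealOfFinset.mp hf
    exact mem_Ipiece_idealOfFinset.mpr ⟨hfd, fun x hx => hfX x (hZX hx)⟩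
  have := LinearMap.finrank_range_add_finrank_ker (evalAt (Ipiece (idealOfFinset Z) d) G)
  rw [LinearMap.range_eq_top.mpr (surjective_evalAt hZX hG hsep), finrank_top,
    Module.finrank_fintype_fun_eq_card, Fintype.card_coe, ker_evalAt hG hforced,
    (Submodule.comapSubtypeEquivOfLe hXZ).finrank_eq] at this
  omega

theorem hilb_idealOfFinset_eq_sub_card {X Z G : Finset (PtQ k)} {i j : ℕ}
    (hZX : Z ⊆ X) (hG : G ⊆ X \ Z)
    (hsep : ∀ P ∈ G, ∃ f, IsSeparator (idealOfFinset (X.erase P)) P f (i, j))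
    (hforced : ∀ P ∈ X \ Z, P ∉ G → ∀ f ∈ Ipiece (idealOfFinset Z) (i, j), evalPt P f = 0) :
    (hilb (idealOfFinset Z) i j : ℤ) = hilb (idealOfFinset X) i j - G.card := by
  have hrank := finrank_Ipiece_idealOfFinset_eq_add_card hZX hG hsep hforced
  have hZ : Module.finrank k (Ipiece (idealOfFinset Z) (i, j)) ≤
      Module.finrank k (weightedHomogeneousSubmodule k bw (i, j)) :=
    Submodule.finrank_mono inf_le_right
  have hX : Module.finrank k (Ipiece (idealOfFinset X) (i, j)) ≤
      Module.finrank k (weightedHomogeneousSubmodule k bw (i, j)) :=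
    Submodule.finrank_mono inf_le_right
  rw [hilb, hilb, Nat.cast_sub hZ, Nat.cast_sub hX]
  omega

end FinitePointSets

theorem Finset.natCast_card_filter_eq_and_eq {ι : Type*} (s : Finset ι) (f g : ι → ℤ) (a b : ℤ) :
    ((s.filter fun l => f l = a ∧ g l = b).card : ℤ) =
      (s.filter fun l => f l ≤ a ∧ g l ≤ b).card - (s.filter fun l => f l ≤ a - 1 ∧ g l ≤ b).card -
        (s.filter fun l => f l ≤ a ∧ g l ≤ b - 1).card +
        (s.filter fun l => f l ≤ a - 1 ∧ g l ≤ b - 1).card := by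
  simp only [Finset.natCast_card_filter, ← Finset.sum_sub_distrib, ← Finset.sum_add_distrib]
  refine Finset.sum_congr rfl fun l _ => ?_
  split_ifs <;> omega

namespace Staircase

variable {k : Type} [Field k] (T : Staircase k)

def point (p : ℕ × ℕ) : PtQ k := (T.R p.1, T.C p.2)

theorem point_injOn : Set.InjOn T.point T.D := fun p hp p' hp' h =>
  Prod.ext (T.hR _ (T.bound p hp).1 _ (T.bound p' hp').1 (congrArg Prod.fst h))
    (T.hC _ (T.bound p hp).2 _ (T.bound p' hp').2 (congrArg Prod.snd h))

-- `(T.colMates a b).card` and `(T.rowMates a b).card` are the paper's `q` and `p` for `P_ab`.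
def colMates (a b : ℕ) : Finset (ℕ × ℕ) := (T.D.filter (·.2 = b)).erase (a, b)

def rowMates (a b : ℕ) : Finset (ℕ × ℕ) := (T.D.filter (·.1 = a)).erase (a, b)

variable {T}

theorem mem_colMates {a b : ℕ} {p : ℕ × ℕ} :
    p ∈ T.colMates a b ↔ p ≠ (a, b) ∧ p ∈ T.D ∧ p.2 = b := by
  simp [colMates]

theorem mem_rowMates {a b : ℕ} {p : ℕ × ℕ} :
    p ∈ T.rowMates a b ↔ p ≠ (a, b) ∧ p ∈ T.D ∧ p.1 = a := by
  simp [rowMates]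

theorem card_colMates_add_one {a b : ℕ} (hab : (a, b) ∈ T.D) :
    (T.colMates a b).card + 1 = T.colCount b :=
  Finset.card_erase_add_one (Finset.mem_filter.mpr ⟨hab, rfl⟩)

theorem card_rowMates_add_one {a b : ℕ} (hab : (a, b) ∈ T.D) :
    (T.rowMates a b).card + 1 = T.rowCount a :=
  Finset.card_erase_add_one (Finset.mem_filter.mpr ⟨hab, rfl⟩)

variable (T)

noncomputable def separator (a b i j : ℕ) : S2 k :=
  (∏ p ∈ T.colMates a b, rowForm (T.R p.1)) * (∏ p ∈ T.rowMates a b, colForm (T.C p.2)) *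
    X (.inl (pivot (T.R a).rep)) ^ (i - (T.colMates a b).card) *
    X (.inr (pivot (T.C b).rep)) ^ (j - (T.rowMates a b).card)

variable {T}

theorem isWeightedHomogeneous_separator {a b i j : ℕ} (hi : (T.colMates a b).card ≤ i)
    (hj : (T.rowMates a b).card ≤ j) : IsWeightedHomogeneous bw (T.separator a b i j) (i, j) := by
  have hrow := IsWeightedHomogeneous.prod (T.colMates a b) (fun p => rowForm (T.R p.1)) _
    fun p _ => isWeightedHomogeneous_rowForm _
  have hcol := IsWeightedHomogeneous.prod (T.rowMates a b) (fun p => colForm (T.C p.2)) _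
    fun p _ => isWeightedHomogeneous_colForm _
  have hx := (isWeightedHomogeneous_X k bw (.inl (pivot (T.R a).rep))).pow
    (i - (T.colMates a b).card)
  have hy := (isWeightedHomogeneous_X k bw (.inr (pivot (T.C b).rep))).pow
    (j - (T.rowMates a b).card)
  rw [separator]
  convert ((hrow.mul hcol).mul hx).mul hy using 1
  simp [bw, Prod.ext_iff]
  omega

theorem evalPt_separator_eq_zero {a b i j : ℕ} (hab : (a, b) ∈ T.D) {p : ℕ × ℕ} (hp : p ∈ T.D)
    (hne : p ≠ (a, b)) : evalPt (T.point p) (T.separator a b i j) = 0 := by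
  obtain ⟨a', b'⟩ := p
  simp only [separator, map_mul, map_prod, mul_eq_zero, Finset.prod_eq_zero_iff,
    evalPt_rowForm_eq_zero_iff, evalPt_colForm_eq_zero_iff, point]
  -- As `D` is lower-closed, `(a, b') ∈ D` if `b' < b`, and `(a', b) ∈ D` if `b ≤ b'`.
  by_cases h : a' = a ∨ b' < b
  · refine Or.inl (Or.inl (Or.inr ⟨(a, b'), mem_rowMates.mpr ⟨?_, ?_, rfl⟩, rfl⟩))
    · rcases h with rfl | h
      · exact hne
      · simp [h.ne]
    · rcases h with rfl | h
      · exact hp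
      · exact T.lower _ hab _ le_rfl h.le
  · simp only [not_or, not_lt] at h
    refine Or.inl (Or.inl (Or.inl ⟨(a', b), mem_colMates.mpr ⟨?_, ?_, rfl⟩, rfl⟩))
    · simp [h.1]
    · exact T.lower _ hp _ le_rfl h.2

theorem evalPt_separator_ne_zero {a b i j : ℕ} (hab : (a, b) ∈ T.D) :
    evalPt (T.point (a, b)) (T.separator a b i j) ≠ 0 := by
  simp only [separator, map_mul, map_prod, map_pow, ne_eq, mul_eq_zero, Finset.prod_eq_zero_iff,
    evalPt_rowForm_eq_zero_iff, evalPt_colForm_eq_zero_iff, point, pow_eq_zero_iff', not_or]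
  refine ⟨⟨⟨?_, ?_⟩, ?_⟩, ?_⟩
  · rintro ⟨p, hp, he⟩
    obtain ⟨hne, hpD, rfl⟩ := mem_colMates.mp hp
    exact hne (T.point_injOn hab hpD (Prod.ext he rfl)).symm
  · rintro ⟨p, hp, he⟩
    obtain ⟨hne, hpD, rfl⟩ := mem_rowMates.mp hp
    exact hne (T.point_injOn hab hpD (Prod.ext rfl he)).symm
  · simp [evalPt, rep_pivot_ne_zero]
  · simp [evalPt, rep_pivot_ne_zero]

theorem ideal_eq : T.ideal = idealOfFinset (T.D.image T.point) := rfl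

theorem residual_eq (E : Finset (ℕ × ℕ)) :
    T.residual E = idealOfFinset ((T.D \ E).image T.point) := rfl

theorem exists_isSeparator {a b i j : ℕ} (hab : (a, b) ∈ T.D) (hi : (T.colMates a b).card ≤ i)
    (hj : (T.rowMates a b).card ≤ j) :
    ∃ f, IsSeparator (idealOfFinset ((T.D.image T.point).erase (T.point (a, b))))
      (T.point (a, b)) f (i, j) := by
  have hf := isWeightedHomogeneous_separator hi hj
  refine ⟨T.separator a b i j, hf, hf.mem_idealOfFinset_iff.mpr fun x hx => ?_,
    evalPt_separator_ne_zero hab⟩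
  obtain ⟨hne, hx⟩ := Finset.mem_erase.mp hx
  obtain ⟨p, hp, rfl⟩ := Finset.mem_image.mp hx
  exact evalPt_separator_eq_zero hab hp fun h => hne (h ▸ rfl)

theorem evalPt_eq_zero_of_lt_card_colMates {F : S2 k} {a b i j : ℕ}
    (hF : IsWeightedHomogeneous bw F (i, j)) (hi : i < (T.colMates a b).card)
    (hmates : ∀ p ∈ T.colMates a b, evalPt (T.point p) F = 0) :
    evalPt (T.point (a, b)) F = 0 := by
  refine evalPt_eq_zero_on_col_of_lt_card hF (T.C b) (S := (T.colMates a b).image (T.R ·.1))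
    ?_ ?_ (T.R a)
  · rwa [Finset.card_image_of_injOn fun p hp p' hp' h => ?_]
    obtain ⟨-, hpD, hpb⟩ := mem_colMates.mp hp
    obtain ⟨-, hpD', hpb'⟩ := mem_colMates.mp hp'
    exact T.point_injOn hpD hpD' (Prod.ext h (congrArg T.C (hpb.trans hpb'.symm)))
  · simp only [Finset.mem_image]
    rintro _ ⟨p, hp, rfl⟩
    simpa [point, (mem_colMates.mp hp).2.2] using hmates p hp

theorem evalPt_eq_zero_of_lt_card_rowMates {F : S2 k} {a b i j : ℕ}
    (hF : IsWeightedHomogeneous bw F (i, j)) (hj : j < (T.rowMates a b).card)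
    (hmates : ∀ p ∈ T.rowMates a b, evalPt (T.point p) F = 0) :
    evalPt (T.point (a, b)) F = 0 := by
  refine evalPt_eq_zero_on_row_of_lt_card hF (T.R a) (S := (T.rowMates a b).image (T.C ·.2))
    ?_ ?_ (T.C b)
  · rwa [Finset.card_image_of_injOn fun p hp p' hp' h => ?_]
    obtain ⟨-, hpD, hpa⟩ := mem_rowMates.mp hp
    obtain ⟨-, hpD', hpa'⟩ := mem_rowMates.mp hp'
    exact T.point_injOn hpD hpD' (Prod.ext (congrArg T.R (hpa.trans hpa'.symm)) h)
  · simp only [Finset.mem_image]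
    rintro _ ⟨p, hp, rfl⟩
    simpa [point, (mem_rowMates.mp hp).2.2] using hmates p hp

theorem evalPt_eq_zero_of_mem_Ipiece_residual {E : Finset (ℕ × ℕ)}
    (hrow : Set.InjOn Prod.fst (E : Set (ℕ × ℕ))) (hcol : Set.InjOn Prod.snd (E : Set (ℕ × ℕ)))
    {a b i j : ℕ} (hab : (a, b) ∈ E)
    (hbad : ¬ ((T.colMates a b).card ≤ i ∧ (T.rowMates a b).card ≤ j)) {f : S2 k}
    (hf : f ∈ Ipiece (T.residual E) (i, j)) : evalPt (T.point (a, b)) f = 0 := by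
  rw [residual_eq] at hf
  obtain ⟨hfd, hfZ⟩ := mem_Ipiece_idealOfFinset.mp hf
  have hZ : ∀ p ∈ T.D, p ∉ E → evalPt (T.point p) f = 0 := fun p hp hpE =>
    hfZ _ (Finset.mem_image_of_mem _ (Finset.mem_sdiff.mpr ⟨hp, hpE⟩))
  rcases not_and_or.mp hbad with hi | hj
  · refine evalPt_eq_zero_of_lt_card_colMates hfd (not_le.mp hi) fun p hp => ?_
    obtain ⟨hne, hpD, hpb⟩ := mem_colMates.mp hp
    exact hZ p hpD fun hpE => hne (hcol hpE hab hpb)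
  · refine evalPt_eq_zero_of_lt_card_rowMates hfd (not_le.mp hj) fun p hp => ?_
    obtain ⟨hne, hpD, hpa⟩ := mem_rowMates.mp hp
    exact hZ p hpD fun hpE => hne (hrow hpE hab hpa)

theorem hilb_residual {E : Finset (ℕ × ℕ)} (hE : E ⊆ T.D)
    (hrow : Set.InjOn Prod.fst (E : Set (ℕ × ℕ))) (hcol : Set.InjOn Prod.snd (E : Set (ℕ × ℕ)))
    (i j : ℕ) :
    (hilb (T.residual E) i j : ℤ) = hilb T.ideal i j -
      (E.filter fun e => (T.colMates e.1 e.2).card ≤ i ∧ (T.rowMates e.1 e.2).card ≤ j).card := by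
  set good := E.filter fun e => (T.colMates e.1 e.2).card ≤ i ∧ (T.rowMates e.1 e.2).card ≤ j
  have hinj : Set.InjOn T.point good :=
    T.point_injOn.mono fun e he => hE (Finset.mem_filter.mp he).1
  rw [residual_eq, ideal_eq, ← Finset.card_image_of_injOn hinj]
  refine hilb_idealOfFinset_eq_sub_card (Finset.image_subset_image Finset.sdiff_subset) ?_ ?_ ?_
  · intro x hx
    obtain ⟨e, he, rfl⟩ := Finset.mem_image.mp hx
    have heE := (Finset.mem_filter.mp he).1
    refine Finset.mem_sdiff.mpr ⟨Finset.mem_image_of_mem _ (hE heE), fun hZ => ?_⟩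
    obtain ⟨p, hp, hpe⟩ := Finset.mem_image.mp hZ
    obtain ⟨hpD, hpE⟩ := Finset.mem_sdiff.mp hp
    exact hpE (T.point_injOn hpD (hE heE) hpe ▸ heE)
  · intro x hx
    obtain ⟨⟨a, b⟩, he, rfl⟩ := Finset.mem_image.mp hx
    obtain ⟨heE, hi, hj⟩ := Finset.mem_filter.mp he
    exact exists_isSeparator (hE heE) hi hj
  · intro x hx hxG f hf
    obtain ⟨hxX, hxZ⟩ := Finset.mem_sdiff.mp hx
    obtain ⟨⟨a, b⟩, hab, rfl⟩ := Finset.mem_image.mp hxX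
    have habE : (a, b) ∈ E := by
      by_contra h
      exact hxZ (Finset.mem_image_of_mem _ (Finset.mem_sdiff.mpr ⟨hab, h⟩))
    exact evalPt_eq_zero_of_mem_Ipiece_residual hrow hcol habE
      (fun hgood => hxG (Finset.mem_image_of_mem _ (Finset.mem_filter.mpr ⟨habE, hgood⟩))) hf

theorem HM_residual {E : Finset (ℕ × ℕ)} (hE : E ⊆ T.D)
    (hrow : Set.InjOn Prod.fst (E : Set (ℕ × ℕ))) (hcol : Set.InjOn Prod.snd (E : Set (ℕ × ℕ)))
    (a b : ℤ) :
    HM (T.residual E) a b = HM T.ideal a b - (E.filter fun e =>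
      ((T.colMates e.1 e.2).card : ℤ) ≤ a ∧ ((T.rowMates e.1 e.2).card : ℤ) ≤ b).card := by
  unfold HM
  split_ifs with hab
  · rw [hilb_residual hE hrow hcol]
    congr 3
    refine Finset.filter_congr fun e _ => ?_
    omega
  · rw [Finset.filter_false_of_mem fun e _ he => hab ⟨by omega, by omega⟩]
    simp

theorem ΔH_residual {E : Finset (ℕ × ℕ)} (hE : E ⊆ T.D)
    (hrow : Set.InjOn Prod.fst (E : Set (ℕ × ℕ))) (hcol : Set.InjOn Prod.snd (E : Set (ℕ × ℕ)))
    (a b : ℤ) :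
    ΔH (T.residual E) a b = ΔH T.ideal a b - (E.filter fun e =>
      ((T.colMates e.1 e.2).card : ℤ) = a ∧ ((T.rowMates e.1 e.2).card : ℤ) = b).card := by
  simp only [ΔH, HM_residual hE hrow hcol, Finset.natCast_card_filter_eq_and_eq]
  ring

end Staircase

theorem stmt14_general (k : Type) [Field k] (T : Staircase k)
    (h : ℕ) (pt : Fin h → ℕ × ℕ)
    (hmem : ∀ l, T.Interior (pt l).1 (pt l).2)
    (hrow : ∀ l l', (pt l).1 = (pt l').1 → l = l')
    (hcol : ∀ l l', (pt l).2 = (pt l').2 → l = l')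
    (q p : Fin h → ℕ)
    (hq : ∀ l, T.colCount (pt l).2 = q l + 1)
    (hp : ∀ l, T.rowCount (pt l).1 = p l + 1) :
    ∀ i j : ℕ,
      ΔH (T.residual (Finset.univ.image pt)) (i : ℤ) (j : ℤ) =
        ΔH T.ideal (i : ℤ) (j : ℤ) -
          ((Finset.univ.filter (fun l : Fin h => q l = i ∧ p l = j)).card : ℤ) := by
  intro i j
  have hD : ∀ l, pt l ∈ T.D := fun l => (hmem l).1
  have hinj : Function.Injective pt := fun l l' hl => hrow l l' (congrArg Prod.fst hl)
  have hmates : ∀ l, (T.colMates (pt l).1 (pt l).2).card = q l ∧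
      (T.rowMates (pt l).1 (pt l).2).card = p l := fun l => by
    have := Staircase.card_colMates_add_one (hD l)
    have := Staircase.card_rowMates_add_one (hD l)
    have := hq l
    have := hp l
    omega
  have hE : Finset.univ.image pt ⊆ T.D := by
    simpa [Finset.subset_iff] using hD
  rw [Staircase.ΔH_residual hE ?_ ?_, Finset.filter_image, Finset.card_image_of_injective _ hinj]
  · simp [hmates]
  all_goals
    simp only [Finset.coe_image, Finset.coe_univ, Set.image_univ]
    rintro _ ⟨l, rfl⟩ _ ⟨l', rfl⟩ hll'
  · rw [hrow l l' hll']
  · rw [hcol l l' hll']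

/-- ΔM_Z(i,j) = ΔM_X(i,j) − r_{ij} where r_{ij} counts the removed interior
points with (q_l,p_l) = (i,j). -/
theorem stmt14 (k : Type) [Field k] [IsAlgClosed k] (T : Staircase k)
    (h : ℕ) (pt : Fin h → ℕ × ℕ)
    (hmem : ∀ l, T.Interior (pt l).1 (pt l).2)
    (hrow : ∀ l l', (pt l).1 = (pt l').1 → l = l')
    (hcol : ∀ l l', (pt l).2 = (pt l').2 → l = l')
    (q p : Fin h → ℕ)
    (hq : ∀ l, T.colCount (pt l).2 = q l + 1)
    (hp : ∀ l, T.rowCount (pt l).1 = p l + 1) :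
    ∀ i j : ℕ,
      ΔH (T.residual (Finset.univ.image pt)) (i : ℤ) (j : ℤ) =
        ΔH T.ideal (i : ℤ) (j : ℤ) -
          ((Finset.univ.filter (fun l : Fin h => q l = i ∧ p l = j)).card : ℤ) :=
  stmt14_general k T h pt hmem hrow hcol q p hq hp
end

section
/- Let X ⊂ P^1 × P^1 be a zero-dimensional complete intersection, i.e., I_X is generated by two bihomogeneous forms forming a regular sequence. Then the two forms have bidegrees (a,0) and (0,b) for some a, b > 0; equivalently, X is the intersection of a curve of type (a,0) with a curve of type (0,b). -/
/- Common setup: the bigraded coordinate ring of Q = P^1 x P^1, bigraded Hilbert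
functions, point ideals, separators, minimal free resolutions, staircase (Ferrers)
configurations of reduced ACM schemes. -/

open MvPolynomial

attribute [local instance] Classical.propDecidable

/-!
If both forms had positive `y`-degree, let `h` be the product of the linear forms in `x₀, x₁`
vanishing at the finitely many first coordinates of the points of `X`. Each `xᵢ yⱼ h` vanishes on
the affine cone over `X`, so by the Nullstellensatz some power of `(xᵢ yⱼ) · h` lies in `I_X`, and
saturation gives `hⁿ ∈ I_X`. But `hⁿ` is a nonzero form of `y`-degree `0`, while `I_X` is
generated in positive `y`-degree. Symmetrically the forms cannot both have positive `x`-degree, and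
neither is constant because `I_X` is proper.
-/

open MvPolynomial

theorem AddChar.map_weight {σ M R : Type*} [AddCommMonoid M] [CommMonoid R] (ψ : AddChar M R)
    (w : σ → M) (μ : σ →₀ ℕ) : ψ (Finsupp.weight w μ) = μ.prod fun s e => ψ (w s) ^ e := by
  induction μ using Finsupp.induction with
  | zero => simp
  | single_add s e μ _ _ ih =>
    rw [map_add, AddChar.map_add_eq_mul, ih, Finsupp.prod_add_index' (by simp) (by simp [pow_add]),
      Finsupp.weight_single, AddChar.map_nsmul_eq_pow, Finsupp.prod_single_index (by simp)]

namespace MvPolynomial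

variable {σ M R : Type*}

theorem IsWeightedHomogeneous.eval_addChar_mul [AddCommMonoid M] [CommSemiring R]
    {w : σ → M} {φ : MvPolynomial σ R} {m : M} (hφ : IsWeightedHomogeneous w φ m)
    (ψ : AddChar M R) (v : σ → R) :
    eval (fun s => ψ (w s) * v s) φ = ψ m * eval v φ := by
  induction hφ using IsWeightedHomogeneous.induction_on with
  | zero => simp
  | add p q _ _ hp hq => simp only [map_add, hp, hq, mul_add]
  | monomial μ r hr =>
    simp only [eval_monomial, mul_pow, Finsupp.prod_mul, ← hr, AddChar.map_weight]
    ring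

theorem IsWeightedHomogeneous.comp_addMonoidHom [AddCommMonoid M] [CommSemiring R]
    {N : Type*} [AddCommMonoid N] {w : σ → M} {φ : MvPolynomial σ R} {m : M}
    (hφ : IsWeightedHomogeneous w φ m) (π : M →+ N) : IsWeightedHomogeneous (π ∘ w) φ (π m) := by
  intro μ hμ
  rw [← hφ hμ, Finsupp.weight_apply, Finsupp.weight_apply, map_finsuppSum]
  simp

theorem weightedHomogeneousComponent_zero_mul_eq_zero [CommSemiring R] {w : σ → ℕ}
    {f : MvPolynomial σ R} {n : ℕ} (hf : IsWeightedHomogeneous w f n) (hn : n ≠ 0)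
    (p : MvPolynomial σ R) : weightedHomogeneousComponent w 0 (p * f) = 0 := by
  classical
  refine weightedHomogeneousComponent_eq_zero' _ _ fun μ hμ => ?_
  obtain ⟨μ₁, -, μ₂, hμ₂, rfl⟩ := Finset.mem_add.mp (support_mul p f hμ)
  rw [map_add, hf (mem_support_iff.mp hμ₂)]
  omega

theorem eq_zero_of_mem_span_pair_of_isWeightedHomogeneous_zero [CommSemiring R] {w : σ → ℕ}
    {f g z : MvPolynomial σ R} {n₁ n₂ : ℕ} (hf : IsWeightedHomogeneous w f n₁) (hn₁ : n₁ ≠ 0)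
    (hg : IsWeightedHomogeneous w g n₂) (hn₂ : n₂ ≠ 0) (hz : z ∈ Ideal.span {f, g})
    (hz₀ : IsWeightedHomogeneous w z 0) : z = 0 := by
  obtain ⟨p, q, rfl⟩ := Ideal.mem_span_pair.mp hz
  rw [← hz₀.weightedHomogeneousComponent_same, map_add,
    weightedHomogeneousComponent_zero_mul_eq_zero hf hn₁,
    weightedHomogeneousComponent_zero_mul_eq_zero hg hn₂, add_zero]

theorem isUnit_of_isWeightedHomogeneous_zero [AddCommMonoid M] [PartialOrder M]
    [CanonicallyOrderedAdd M] [IsAddTorsionFree M] {K : Type*} [Field K] {w : σ → M}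
    (hw : ∀ i, w i ≠ 0) {φ : MvPolynomial σ K} (hφ : IsWeightedHomogeneous w φ 0)
    (h₀ : φ ≠ 0) : IsUnit φ := by
  rw [← hφ.weightedHomogeneousComponent_same, weightedHomogeneousComponent_zero _ hw] at h₀ ⊢
  exact (isUnit_iff_ne_zero.mpr fun h => h₀ (by rw [h, map_zero])).map C

end MvPolynomial

section LinearForms

variable {k : Type} [Field k] {σ : Type*}

noncomputable def prodLinearForms (e : Fin 2 → σ) (F : Finset (P1 k)) : MvPolynomial σ k :=
  ∏ x ∈ F, (C (x.rep 1) * X (e 0) - C (x.rep 0) * X (e 1))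

theorem isWeightedHomogeneous_prodLinearForms {M : Type*} [AddCommMonoid M] {w : σ → M} {c : M}
    (e : Fin 2 → σ) (he₀ : w (e 0) = c) (he₁ : w (e 1) = c) (F : Finset (P1 k)) :
    IsWeightedHomogeneous w (prodLinearForms e F) (F.card • c) := by
  rw [← Finset.sum_const]
  refine IsWeightedHomogeneous.prod _ _ _ fun x _ => ?_
  have h₀ := isWeightedHomogeneous_X k w (e 0)
  have h₁ := isWeightedHomogeneous_X k w (e 1)
  rw [he₀] at h₀
  rw [he₁] at h₁
  exact (h₀.C_mul _).sub (h₁.C_mul _)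

theorem prodLinearForms_ne_zero {e : Fin 2 → σ} (he : Function.Injective e) (F : Finset (P1 k)) :
    prodLinearForms e F ≠ 0 := by
  classical
  refine Finset.prod_ne_zero_iff.mpr fun x _ h => x.rep_nonzero ?_
  have h₀ := congrArg (eval (Pi.single (e 0) 1)) h
  have h₁ := congrArg (eval (Pi.single (e 1) 1)) h
  simp [he.ne] at h₀ h₁
  ext i; fin_cases i <;> simp [h₀, h₁]

theorem eval_prodLinearForms_eq_zero {e : Fin 2 → σ} {F : Finset (P1 k)} {v : σ → k}
    (hv : v ∘ e ≠ 0) (hF : Projectivization.mk k (v ∘ e) hv ∈ F) :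
    eval v (prodLinearForms e F) = 0 := by
  rw [prodLinearForms, map_prod]
  refine Finset.prod_eq_zero hF ?_
  obtain ⟨a, ha⟩ := Projectivization.exists_smul_eq_mk_rep k (v ∘ e) hv
  simp only [← ha, map_sub, map_mul, eval_C, eval_X, Units.smul_def, Pi.smul_apply,
    Function.comp_apply, smul_eq_mul]
  ring

end LinearForms

section Biprojective

variable {k : Type} [Field k]

attribute [local instance] weightedGradedAlgebra

noncomputable def irrelevantIdeal (k : Type) [Field k] : Ideal (S2 k) :=
  Ideal.span (Set.range fun ij : Fin 2 × Fin 2 => X (Sum.inl ij.1) * X (Sum.inr ij.2))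

theorem IsSat.mem_of_pow_mul_span_le {I : Ideal (S2 k)} (hI : IsSat I) {n : ℕ} {t : S2 k}
    (h : irrelevantIdeal k ^ n * Ideal.span {t} ≤ I) : t ∈ I := by
  induction n generalizing t with
  | zero =>
    rw [pow_zero, Ideal.one_eq_top, Ideal.top_mul] at h
    exact (Ideal.span_singleton_le_iff_mem I).mp h
  | succ n ih =>
    refine hI t fun i j => ih (le_trans ?_ h)
    have hij : Ideal.span {X (Sum.inl i) * X (Sum.inr j)} ≤ irrelevantIdeal k :=
      (Ideal.span_singleton_le_iff_mem _).mpr (Ideal.subset_span (Set.mem_range_self (i, j)))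
    calc irrelevantIdeal k ^ n * Ideal.span {X (Sum.inl i) * X (Sum.inr j) * t}
        = irrelevantIdeal k ^ n *
            (Ideal.span {X (Sum.inl i) * X (Sum.inr j)} * Ideal.span {t}) := by
          rw [Ideal.span_singleton_mul_span_singleton]
      _ ≤ irrelevantIdeal k ^ n * (irrelevantIdeal k * Ideal.span {t}) := by gcongr
      _ = irrelevantIdeal k ^ (n + 1) * Ideal.span {t} := by rw [pow_succ, mul_assoc]

theorem MvPolynomial.IsWeightedHomogeneous.eval_sum_elim_smul {f : S2 k} {m : ℕ × ℕ}
    (hf : IsWeightedHomogeneous bw f m) (c d : k) (u w : Fin 2 → k) :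
    eval (Sum.elim (c • u) (d • w)) f = c ^ m.1 * d ^ m.2 * eval (Sum.elim u w) f := by
  let ψ : AddChar (ℕ × ℕ) k :=
    { toFun := fun m => c ^ m.1 * d ^ m.2
      map_zero_eq_one' := by simp
      map_add_eq_mul' := fun a b => by simp only [Prod.fst_add, Prod.snd_add, pow_add]; ring }
  have hψ : Sum.elim (c • u) (d • w) = fun s => ψ (bw s) * Sum.elim u w s := by
    funext s; cases s <;> simp [ψ, bw]
  rw [hψ, hf.eval_addChar_mul]
  rfl

theorem mk_mem_biZeroLocus_span_pair {f g : S2 k} {m₁ m₂ : ℕ × ℕ}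
    (hf : IsWeightedHomogeneous bw f m₁) (hg : IsWeightedHomogeneous bw g m₂)
    {u w : Fin 2 → k} (hu : u ≠ 0) (hw : w ≠ 0)
    (hfu : eval (Sum.elim u w) f = 0) (hgu : eval (Sum.elim u w) g = 0) :
    (Projectivization.mk k u hu, Projectivization.mk k w hw) ∈
      biZeroLocus (Ideal.span {f, g}) := by
  intro z hz d
  obtain ⟨a, ha⟩ := Projectivization.exists_smul_eq_mk_rep k u hu
  obtain ⟨b, hb⟩ := Projectivization.exists_smul_eq_mk_rep k w hw
  have hker : Ideal.span {f, g} ≤ RingHom.ker (eval (Sum.elim ((a : k) • u) ((b : k) • w))) := by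
    rw [Ideal.span_le]
    rintro _ (rfl | rfl)
    · simp [hf.eval_sum_elim_smul, hfu]
    · simp [hg.eval_sum_elim_smul, hgu]
  have hhom : (Ideal.span {f, g}).IsHomogeneous (weightedHomogeneousSubmodule k bw) := by
    refine Ideal.homogeneous_span _ _ ?_
    rintro _ (rfl | rfl)
    exacts [⟨m₁, hf⟩, ⟨m₂, hg⟩]
  have := hker (weightedHomogeneousComponent_mem_of_mem k bw hhom hz d)
  rwa [RingHom.mem_ker, ← Units.smul_def, ← Units.smul_def, ha, hb] at this

theorem bidegree_ne_zero_of_mem {I : Ideal (S2 k)} (hI : I ≠ ⊤) {f : S2 k}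
    {m : ℕ × ℕ} (hf : IsWeightedHomogeneous bw f m) (hf₀ : f ≠ 0) (hfI : f ∈ I) : m ≠ 0 := by
  rintro rfl
  have hbw : ∀ s, bw s ≠ 0 := by rintro (i | i) <;> simp [bw]
  exact hI (Ideal.eq_top_of_isUnit_mem I hfI (isUnit_of_isWeightedHomogeneous_zero hbw hf hf₀))

end Biprojective

section CompleteIntersection

variable {k : Type} [Field k] [IsAlgClosed k] {f g : S2 k} {m₁ m₂ : ℕ × ℕ}

theorem irrelevantIdeal_mul_span_le_radical (hf : IsWeightedHomogeneous bw f m₁)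
    (hg : IsWeightedHomogeneous bw g m₂) {h : S2 k}
    (hvan : ∀ (u w : Fin 2 → k) (hu : u ≠ 0) (hw : w ≠ 0),
      (Projectivization.mk k u hu, Projectivization.mk k w hw) ∈
        biZeroLocus (Ideal.span {f, g}) → eval (Sum.elim u w) h = 0) :
    irrelevantIdeal k * Ideal.span {h} ≤ (Ideal.span {f, g}).radical := by
  intro r hr
  rw [← vanishingIdeal_zeroLocus_eq_radical (K := k), mem_vanishingIdeal_iff]
  intro v hv
  rw [aeval_eq_eval]
  by_cases hx : v ∘ Sum.inl = 0 ∨ v ∘ Sum.inr = 0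
  · suffices irrelevantIdeal k ≤ RingHom.ker (eval v) from
      RingHom.mem_ker.mp (this (Ideal.mul_le_left hr))
    rw [irrelevantIdeal, Ideal.span_le]
    rintro _ ⟨⟨i, j⟩, rfl⟩
    simpa using hx.imp (congrFun · i) (congrFun · j)
  · rw [not_or] at hx
    suffices Ideal.span {h} ≤ RingHom.ker (eval v) from
      RingHom.mem_ker.mp (this (Ideal.mul_le_right hr))
    have hfv : eval (Sum.elim (v ∘ Sum.inl) (v ∘ Sum.inr)) f = 0 := by
      simpa using hv f (Ideal.subset_span (by simp))
    have hgv : eval (Sum.elim (v ∘ Sum.inl) (v ∘ Sum.inr)) g = 0 := by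
      simpa using hv g (Ideal.subset_span (by simp))
    rw [Ideal.span_singleton_le_iff_mem, RingHom.mem_ker, ← Sum.elim_comp_inl_inr v]
    exact hvan _ _ hx.1 hx.2 (mk_mem_biZeroLocus_span_pair hf hg hx.1 hx.2 hfv hgv)

theorem eq_zero_of_vanishing_on_biZeroLocus (hf : IsWeightedHomogeneous bw f m₁)
    (hg : IsWeightedHomogeneous bw g m₂) (hsat : IsSat (Ideal.span {f, g}))
    (π : ℕ × ℕ →+ ℕ) (hπ₁ : π m₁ ≠ 0) (hπ₂ : π m₂ ≠ 0) {h : S2 k}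
    (hh : IsWeightedHomogeneous (π ∘ bw) h 0)
    (hvan : ∀ (u w : Fin 2 → k) (hu : u ≠ 0) (hw : w ≠ 0),
      (Projectivization.mk k u hu, Projectivization.mk k w hw) ∈
        biZeroLocus (Ideal.span {f, g}) → eval (Sum.elim u w) h = 0) :
    h = 0 := by
  obtain ⟨n, hn⟩ := Ideal.exists_pow_le_of_le_radical_of_fg
    (irrelevantIdeal_mul_span_le_radical hf hg hvan) (IsNoetherian.noetherian _)
  rw [mul_pow, Ideal.span_singleton_pow] at hn
  exact eq_zero_of_pow_eq_zero (n := n) <|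
    eq_zero_of_mem_span_pair_of_isWeightedHomogeneous_zero (hf.comp_addMonoidHom π) hπ₁
      (hg.comp_addMonoidHom π) hπ₂ (hsat.mem_of_pow_mul_span_le hn) (by simpa using hh.pow n)

theorem snd_eq_zero_or_snd_eq_zero {a₁ b₁ a₂ b₂ : ℕ} (hf : IsWeightedHomogeneous bw f (a₁, b₁))
    (hg : IsWeightedHomogeneous bw g (a₂, b₂)) (hsat : IsSat (Ideal.span {f, g}))
    (hfin : (biZeroLocus (Ideal.span {f, g})).Finite) : b₁ = 0 ∨ b₂ = 0 := by
  by_contra! hb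
  set F := (hfin.image Prod.fst).toFinset
  refine prodLinearForms_ne_zero Sum.inl_injective F (eq_zero_of_vanishing_on_biZeroLocus hf hg
    hsat (AddMonoidHom.snd ℕ ℕ) hb.1 hb.2 ?_ fun u w hu _ hZ => ?_)
  · simpa using isWeightedHomogeneous_prodLinearForms (w := AddMonoidHom.snd ℕ ℕ ∘ bw) (c := 0)
      Sum.inl rfl rfl F
  · exact eval_prodLinearForms_eq_zero (v := Sum.elim u w) hu
      ((Set.Finite.mem_toFinset _).mpr ⟨_, hZ, rfl⟩)

theorem fst_eq_zero_or_fst_eq_zero {a₁ b₁ a₂ b₂ : ℕ} (hf : IsWeightedHomogeneous bw f (a₁, b₁))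
    (hg : IsWeightedHomogeneous bw g (a₂, b₂)) (hsat : IsSat (Ideal.span {f, g}))
    (hfin : (biZeroLocus (Ideal.span {f, g})).Finite) : a₁ = 0 ∨ a₂ = 0 := by
  by_contra! ha
  set F := (hfin.image Prod.snd).toFinset
  refine prodLinearForms_ne_zero Sum.inr_injective F (eq_zero_of_vanishing_on_biZeroLocus hf hg
    hsat (AddMonoidHom.fst ℕ ℕ) ha.1 ha.2 ?_ fun u w _ hw hZ => ?_)
  · simpa using isWeightedHomogeneous_prodLinearForms (w := AddMonoidHom.fst ℕ ℕ ∘ bw) (c := 0)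
      Sum.inr rfl rfl F
  · exact eval_prodLinearForms_eq_zero (v := Sum.elim u w) hw
      ((Set.Finite.mem_toFinset _).mpr ⟨_, hZ, rfl⟩)

end CompleteIntersection

/-- a zero-dimensional complete intersection in P¹ × P¹ is the intersection
of a curve of type (a,0) and a curve of type (0,b). -/
theorem stmt17 (k : Type) [Field k] [IsAlgClosed k]
    (f g : S2 k) (a1 b1 a2 b2 : ℕ)
    (hf : IsWeightedHomogeneous bw f (a1, b1))
    (hg : IsWeightedHomogeneous bw g (a2, b2))
    (hf0 : f ≠ 0)
    (hreg : ∀ h : S2 k, g * h ∈ Ideal.span {f} → h ∈ Ideal.span {f})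
    (hne : Ideal.span {f, g} ≠ (⊤ : Ideal (S2 k)))
    (hsat : IsSat (Ideal.span {f, g}))
    (hfin : (biZeroLocus (Ideal.span {f, g})).Finite) :
    (b1 = 0 ∧ a2 = 0 ∧ 0 < a1 ∧ 0 < b2) ∨ (a1 = 0 ∧ b2 = 0 ∧ 0 < b1 ∧ 0 < a2) := by
  have hg0 : g ≠ 0 := by
    rintro rfl
    exact hne ((Ideal.eq_top_iff_one _).mpr (Ideal.span_mono (by simp) (hreg 1 (by simp))))
  have hdf := bidegree_ne_zero_of_mem hne hf hf0 (Ideal.subset_span (by simp))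
  have hdg := bidegree_ne_zero_of_mem hne hg hg0 (Ideal.subset_span (by simp))
  have hb := snd_eq_zero_or_snd_eq_zero hf hg hsat hfin
  have ha := fst_eq_zero_or_fst_eq_zero hf hg hsat hfin
  simp only [ne_eq, Prod.mk_eq_zero, not_and_or] at hdf hdg
  omega
end
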